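/- Under the Setup, let f be the intersection point of L₁'' with the side [AB] and let j be the intersection point of L₁'' with the side [BC]. Then |Af| ≥ 1 and |jC| ≥ 1. -/

import Mathlib

open Real

noncomputable section

/-- Points of the Euclidean plane. -/
abbrev Pt := EuclideanSpace ℝ (Fin 2)

/-- An axis-aligned rectangle (all sides of positive length, parallel to the axes),
given by the coordinates of its sides. -/
structure AARect where
  xmin : ℝ
  xmax : ℝ
  ymin : ℝ
  ymax : ℝ
  hx : xmin < xmax
  hy : ymin < ymax

/-- The set of points of an axis-aligned rectangle. -/
def AARect.set (R : AARect) : Set Pt :=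
  {q | q 0 ∈ Set.Icc R.xmin R.xmax ∧ q 1 ∈ Set.Icc R.ymin R.ymax}

/-- The center of an axis-aligned rectangle. -/
def AARect.center (R : AARect) : Pt :=
  !₂[(R.xmin + R.xmax) / 2, (R.ymin + R.ymax) / 2]

/-- The North-West vertex `A`. -/
def AARect.A (R : AARect) : Pt := !₂[R.xmin, R.ymax]

/-- The North-East vertex `B`. -/
def AARect.B (R : AARect) : Pt := !₂[R.xmax, R.ymax]

/-- The South-East vertex `C`. -/
def AARect.C (R : AARect) : Pt := !₂[R.xmax, R.ymin]

/-- The South-West vertex `D`. -/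
def AARect.D (R : AARect) : Pt := !₂[R.xmin, R.ymin]

/-- The line through the point `p` with direction vector `v`. -/
def lineThrough (p v : Pt) : Set Pt := {q | ∃ t : ℝ, q = p + t • v}

/-- The closed half-plane to the right (East) of the (non-vertical) line through `p` with
direction `v`: the set of points having, on that line, a point with the same second
coordinate and a smaller-or-equal first coordinate. -/
def rightOf (p v : Pt) : Set Pt :=
  {q | ∃ w ∈ lineThrough p v, w 1 = q 1 ∧ w 0 ≤ q 0}

/-!
The line `L₁` has negative slope, so its normal pointing into `H` is proportional to
`(|v 1|, |v 0|)`; as `L₁''` is at distance `2` from `L₁`, every `a ∈ L₁` and `f ∈ L₁''` satisfy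
  `(f 0 - a 0) * |v 1| + (f 1 - a 1) * |v 0| = 2 * ‖v‖ ≥ |v 0| + |v 1|`.
For `f` on the top side, `f 1 - a 1 ≤ |Aa| < 1` forces `f 0 - a 0 ≥ 1`; for `j` and `d` on the
right side, `j 1 - d 1 ≥ 2`. The identity is read off `cross (p' - p) v`, which is `‖v‖` times
the normal component of `p' - p`: Lagrange's identity gives its absolute value, and the
side condition its sign.
-/

def cross (x v : Pt) : ℝ := x 0 * v 1 - x 1 * v 0

lemma cross_sub_left (x y v : Pt) : cross (x - y) v = cross x v - cross y v := by
  simp only [cross, PiLp.sub_apply]; ring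

lemma cross_eq_of_mem_lineThrough {p q v : Pt} (hq : q ∈ lineThrough p v) :
    cross q v = cross p v := by
  obtain ⟨t, rfl⟩ := hq
  simp only [cross, PiLp.add_apply, PiLp.smul_apply, smul_eq_mul]; ring

lemma cross_sq_add_inner_sq (x v : Pt) :
    cross x v ^ 2 + inner ℝ x v ^ 2 = ‖x‖ ^ 2 * ‖v‖ ^ 2 := by
  simp only [cross, EuclideanSpace.real_norm_sq_eq, PiLp.inner_apply, Fin.sum_univ_two,
    RCLike.inner_apply, conj_trivial]
  ring

lemma cross_sub_mul_apply_one_nonneg {p q v : Pt} (hq : q ∈ rightOf p v) :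
    0 ≤ cross (q - p) v * v 1 := by
  obtain ⟨w, ⟨t, rfl⟩, hw1, hw0⟩ := hq
  simp only [PiLp.add_apply, PiLp.smul_apply, smul_eq_mul] at hw1 hw0
  have hcross : cross (q - p) v = (q 0 - (p 0 + t * v 0)) * v 1 := by
    simp only [cross, PiLp.sub_apply]; rw [← hw1]; ring
  rw [hcross, mul_assoc]
  exact mul_nonneg (sub_nonneg.mpr hw0) (mul_self_nonneg _)

lemma cross_mul_apply_one_eq {x v : Pt} (hperp : inner ℝ x v = 0)
    (hside : 0 ≤ cross x v * v 1) : cross x v * v 1 = ‖x‖ * ‖v‖ * |v 1| := by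
  have hsq := cross_sq_add_inner_sq x v
  rw [hperp] at hsq
  refine (sq_eq_sq₀ hside (by positivity)).mp ?_
  rw [mul_pow, mul_pow, sq_abs]
  linear_combination (v 1 ^ 2) * hsq

lemma cross_sub_mul_apply_one_eq {p p' v a f : Pt} (ha : a ∈ lineThrough p v)
    (hf : f ∈ lineThrough p' v) (hperp : inner ℝ (p' - p) v = 0)
    (hside : p' ∈ rightOf p v) : cross (f - a) v * v 1 = dist p p' * ‖v‖ * |v 1| := by
  rw [cross_sub_left, cross_eq_of_mem_lineThrough ha, cross_eq_of_mem_lineThrough hf,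
    ← cross_sub_left, dist_comm, dist_eq_norm]
  exact cross_mul_apply_one_eq hperp (cross_sub_mul_apply_one_nonneg hside)

lemma sub_mul_abs_add_sub_mul_abs_eq {p p' v a f : Pt} (hv : v 0 * v 1 < 0)
    (ha : a ∈ lineThrough p v) (hf : f ∈ lineThrough p' v)
    (hperp : inner ℝ (p' - p) v = 0) (hside : p' ∈ rightOf p v) :
    (f 0 - a 0) * |v 1| + (f 1 - a 1) * |v 0| = dist p p' * ‖v‖ := by
  have h := cross_sub_mul_apply_one_eq ha hf hperp hside
  simp only [cross, PiLp.sub_apply] at h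
  have hv1 : 0 < |v 1| := abs_pos.mpr (right_ne_zero_of_mul hv.ne)
  have hprod : v 0 * v 1 = -(|v 0| * |v 1|) := by rw [← abs_mul, abs_of_neg hv, neg_neg]
  have hsq : v 1 * v 1 = |v 1| * |v 1| := (abs_mul_abs_self _).symm
  refine mul_right_cancel₀ hv1.ne' ?_
  linear_combination h - (f 0 - a 0) * hsq + (f 1 - a 1) * hprod

lemma sub_apply_le_dist {ι : Type*} [Fintype ι] (x y : EuclideanSpace ℝ ι) (i : ι) :
    x i - y i ≤ dist x y :=
  (le_abs_self _).trans ((Real.dist_eq _ _).symm.le.trans (PiLp.dist_apply_le x y i))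

theorem dist_Af_jC_ge_one_general (R : AARect)
    (v : Pt) (hv : v 0 * v 1 < 0)
    (a : Pt) (haL : a ∈ lineThrough R.center v)
    (ha0 : a 0 = R.xmin)
    (haA : dist R.A a < 1)
    (d : Pt) (hdL : d ∈ lineThrough R.center v)
    (hd0 : d 0 = R.xmax) (hd1 : d 1 ∈ Set.Icc R.ymin R.ymax)
    (p' : Pt) (hp'dist : dist R.center p' = 2)
    (hp'perp : (inner ℝ (p' - R.center) v : ℝ) = 0)
    (hp'side : p' ∈ rightOf R.center v)
    (f : Pt) (hfL : f ∈ lineThrough p' v)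
    (hf1 : f 1 = R.ymax)
    (j : Pt) (hjL : j ∈ lineThrough p' v)
    (hj0 : j 0 = R.xmax) :
    1 ≤ dist R.A f ∧ 1 ≤ dist j R.C := by
  have hf := sub_mul_abs_add_sub_mul_abs_eq hv haL hfL hp'perp hp'side
  have hj := sub_mul_abs_add_sub_mul_abs_eq hv hdL hjL hp'perp hp'side
  rw [ha0, hf1, hp'dist] at hf
  rw [hd0, hj0, sub_self, zero_mul, zero_add, hp'dist] at hj
  have hv0 : |v 0| ≤ ‖v‖ := PiLp.norm_apply_le v 0
  have hv1 : |v 1| ≤ ‖v‖ := PiLp.norm_apply_le v 1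
  have hAa : R.ymax - a 1 < 1 := by
    simpa [AARect.A] using (sub_apply_le_dist R.A a 1).trans_lt haA
  have hAf : f 0 - R.xmin ≤ dist R.A f := by
    simpa [AARect.A, dist_comm f] using sub_apply_le_dist f R.A 0
  have hjC : j 1 - R.ymin ≤ dist j R.C := by
    simpa [AARect.C] using sub_apply_le_dist j R.C 1
  have hAa' : (R.ymax - a 1) * |v 0| ≤ |v 0| := mul_le_of_le_one_left (abs_nonneg _) hAa.le
  have hAf' : 1 ≤ f 0 - R.xmin :=
    le_of_mul_le_mul_right (by linarith) (abs_pos.mpr (right_ne_zero_of_mul hv.ne))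
  have hjd : 2 ≤ j 1 - d 1 :=
    le_of_mul_le_mul_right (by linarith) (abs_pos.mpr (left_ne_zero_of_mul hv.ne))
  exact ⟨hAf'.trans hAf, by linarith [hd1.1]⟩

/-- Setup: `R = ABCD` is an axis-aligned rectangle with all sides of length at least 4 and
center `p`; `L₁` is the line through `p` with direction `v` of negative slope, meeting
`[AD]` at `a` and `[BC]` at `d`, with `|Aa| < 1`; `p'` is the point at distance 2 from `p`
on the perpendicular to `L₁` through `p`, on the side of `L₁` to the right of `L₁`;
`L₁''` is the line through `p'` parallel to `L₁`. If `f` is the intersection point of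
`L₁''` with the side `[AB]` and `j` the intersection point of `L₁''` with the side `[BC]`,
then `|Af| ≥ 1` and `|jC| ≥ 1`. -/
theorem dist_Af_jC_ge_one (R : AARect)
    (h4x : 4 ≤ R.xmax - R.xmin) (h4y : 4 ≤ R.ymax - R.ymin)
    (v : Pt) (hv : v 0 * v 1 < 0)
    (a : Pt) (haL : a ∈ lineThrough R.center v)
    (ha0 : a 0 = R.xmin) (ha1 : a 1 ∈ Set.Icc R.ymin R.ymax)
    (haA : dist R.A a < 1)
    (d : Pt) (hdL : d ∈ lineThrough R.center v)
    (hd0 : d 0 = R.xmax) (hd1 : d 1 ∈ Set.Icc R.ymin R.ymax)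
    (p' : Pt) (hp'dist : dist R.center p' = 2)
    (hp'perp : (inner ℝ (p' - R.center) v : ℝ) = 0)
    (hp'side : p' ∈ rightOf R.center v)
    (f : Pt) (hfL : f ∈ lineThrough p' v)
    (hf1 : f 1 = R.ymax) (hf0 : f 0 ∈ Set.Icc R.xmin R.xmax)
    (j : Pt) (hjL : j ∈ lineThrough p' v)
    (hj0 : j 0 = R.xmax) (hj1 : j 1 ∈ Set.Icc R.ymin R.ymax) :
    1 ≤ dist R.A f ∧ 1 ≤ dist j R.C :=
  dist_Af_jC_ge_one_general R v hv a haL ha0 haA d hdL hd0 hd1 p' hp'dist hp'perp hp'side f hfL hf1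
    j hjL hj0
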